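/- Let (A,m) be a catenary noetherian local ring and 𝔞 an ideal of A whose set of minimal primes is {𝔭_1,…,𝔭_t} with t ≥ 2. If the punctured spectrum of A/𝔞 is connected, then there exists an index i such that the punctured spectrum of A/𝔟_i is connected, where 𝔟_i = ⋂_{j≠i} 𝔭_j. -/

import Mathlib

open CategoryTheory IsLocalRing

/-- The punctured spectrum of a ring: the primes that are not maximal. For a local
ring `A` this is `Spec A ∖ {𝔪}`. -/
def puncturedSpectrum (A : Type) [CommRing A] : Set (PrimeSpectrum A) :=
  {p | ¬ p.asIdeal.IsMaximal}

/-- A noetherian local ring is regular if its maximal ideal is generated by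
`dim R` elements. -/
def IsRegularLocalRing' (R : Type) [CommRing R] [IsLocalRing R] : Prop :=
  IsNoetherianRing R ∧
    ∃ s : Finset R, Ideal.span (s : Set R) = maximalIdeal R ∧
      (s.card : WithBot ℕ∞) = ringKrullDim R

/-- `Hom_R(R/J, M)` is killed by `J`. -/
theorem homQuotientTorsion (R : Type) [CommRing R] (J : Ideal R)
    (M : Type) [AddCommGroup M] [Module R M] :
    Module.IsTorsionBySet R ((R ⧸ J) →ₗ[R] M) J := by
  intro f a
  refine LinearMap.ext fun x => ?_
  obtain ⟨r, rfl⟩ := Ideal.Quotient.mk_surjective x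
  have hx : (a : R) • (Ideal.Quotient.mk J r) = (0 : R ⧸ J) := by
    rw [Algebra.smul_def, Ideal.Quotient.algebraMap_eq,
      Ideal.Quotient.eq_zero_iff_mem.mpr a.2, zero_mul]
  rw [LinearMap.smul_apply, ← map_smul, hx, map_zero, LinearMap.zero_apply]

/-- `dim_{R/J} Hom_R(R/J, M)`, the dimension (as a vector space over `R/J` when `J` is
maximal) of the module of `R`-linear maps `R/J → M`. -/
noncomputable def homDim (R : Type) [CommRing R] (J : Ideal R)
    (M : Type) [AddCommGroup M] [Module R M] : Cardinal :=
  letI : Module (R ⧸ J) ((R ⧸ J) →ₗ[R] M) :=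
    Module.IsTorsionBySet.module (homQuotientTorsion R J M)
  Module.rank (R ⧸ J) ((R ⧸ J) →ₗ[R] M)

/-- The height of an ideal: the infimum of the heights of the primes containing it. -/
noncomputable def idealHeight {A : Type} [CommRing A] (J : Ideal A) : ℕ∞ :=
  ⨅ p ∈ {p : PrimeSpectrum A | J ≤ p.asIdeal}, Order.height p

/-- The Hochster–Huneke graph of a ring: vertices are the top-dimensional minimal
primes, and two distinct vertices `P`, `Q` are adjacent iff `height (P + Q) = 1`. -/
def hochsterHunekeGraph (A : Type) [CommRing A] :
    SimpleGraph {P : Ideal A // P ∈ minimalPrimes A ∧ ringKrullDim (A ⧸ P) = ringKrullDim A} where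
  Adj P Q := P ≠ Q ∧ idealHeight (P.1 ⊔ Q.1) = 1
  symm := ⟨fun P Q h => ⟨h.1.symm, by rw [sup_comm]; exact h.2⟩⟩
  loopless := ⟨fun P h => h.1 rfl⟩

/-- The local cohomological dimension of an ideal. -/
noncomputable def lcd (R : Type) [CommRing R] (I : Ideal R) : ℕ∞ :=
  sSup ((fun j : ℕ => (j : ℕ∞)) '' {j : ℕ | Nontrivial ((localCohomology I j).obj (ModuleCat.of R R))})

/-- The depth of a local ring: the least `j` with `Ext^j(k, A) ≠ 0`. -/
noncomputable def ringDepth (A : Type) [CommRing A] [IsLocalRing A] : ℕ∞ :=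
  sInf ((fun j : ℕ => (j : ℕ∞)) '' {j : ℕ | Nontrivial (((Ext A (ModuleCat A) j).obj
    (Opposite.op (ModuleCat.of A (ResidueField A)))).obj (ModuleCat.of A A))})

/-- Serre's condition `(S_i)`: `depth A_P ≥ min(i, dim A_P)` for all primes `P`. -/
def SerreCondition (A : Type) [CommRing A] (i : ℕ) : Prop :=
  ∀ P : PrimeSpectrum A,
    min (i : WithBot ℕ∞) (ringKrullDim (Localization.AtPrime P.asIdeal)) ≤
      (ringDepth (Localization.AtPrime P.asIdeal) : WithBot ℕ∞)

/-- A ring is catenary if any two saturated chains of primes with the same endpoints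
have the same length. -/
def IsCatenaryRing (A : Type) [CommRing A] : Prop :=
  ∀ c₁ c₂ : LTSeries (PrimeSpectrum A),
    c₁.head = c₂.head → c₁.last = c₂.last →
    (∀ i : Fin c₁.length, c₁.toFun i.castSucc ⋖ c₁.toFun i.succ) →
    (∀ i : Fin c₂.length, c₂.toFun i.castSucc ⋖ c₂.toFun i.succ) →
    c₁.length = c₂.length

/-- A local ring is equidimensional if `dim(A/P) = dim A` for every minimal prime `P`. -/
def EquidimensionalRing (A : Type) [CommRing A] : Prop :=
  ∀ P ∈ minimalPrimes A, ringKrullDim (A ⧸ P) = ringKrullDim A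

/-! The sets `V(𝔭ⱼ) ∩ Spec° A` are connected (each lies between the generic point `𝔭ⱼ` and its
closure; `𝔭ⱼ ≠ 𝔪`, since a minimal prime equal to `𝔪` would force `V(𝔞) = {𝔪}`) and closed in their union `V(𝔞) ∩ Spec° A`, which is the punctured spectrum of `A/𝔞`.
A connected finite union of relatively closed connected sets has a connected intersection graph,
and a finite connected graph with at least two vertices has a vertex whose removal leaves it
connected. Dropping the corresponding minimal prime `𝔭ᵢ` leaves the connected set
`V(𝔟ᵢ) ∩ Spec° A`, the punctured spectrum of `A/𝔟ᵢ`. -/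

open PrimeSpectrum Topology

section IntersectionGraph

variable {X ι : Type*}

def intersectionGraph (S : ι → Set X) : SimpleGraph ι :=
  SimpleGraph.fromRel fun j k => (S j ∩ S k).Nonempty

lemma intersectionGraph_adj {S : ι → Set X} {j k : ι} :
    (intersectionGraph S).Adj j k ↔ j ≠ k ∧ (S j ∩ S k).Nonempty := by
  simp [intersectionGraph, Set.inter_comm]

lemma intersectionGraph_comp_subtypeVal (S : ι → Set X) (s : Set ι) :
    intersectionGraph (S ∘ Subtype.val : s → Set X) = (intersectionGraph S).induce s := by
  ext j k
  simp [intersectionGraph_adj, Subtype.val_inj]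

variable [TopologicalSpace X]

lemma IsConnected.iUnion_of_connected_intersectionGraph {S : ι → Set X}
    (hS : ∀ j, _root_.IsConnected (S j)) (hG : (intersectionGraph S).Connected) :
    _root_.IsConnected (⋃ j, S j) :=
  haveI := hG.nonempty
  IsConnected.iUnion_of_reflTransGen hS fun j k =>
    Relation.ReflTransGen.mono (fun _ _ h => (intersectionGraph_adj.mp h).2) _ _
      ((SimpleGraph.reachable_iff_reflTransGen j k).mp (hG j k))

lemma intersectionGraph_preconnected_of_isClosed [Finite ι] {C : ι → Set X}
    (hC : ∀ j, IsClosed (C j)) {P : Set X} (hne : ∀ j, (C j ∩ P).Nonempty)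
    (hU : IsPreconnected (⋃ j, C j ∩ P)) :
    (intersectionGraph fun j => C j ∩ P).Preconnected := by
  intro j k
  by_contra hjk
  set K := {l | (intersectionGraph fun j => C j ∩ P).Reachable j l}
  -- The pieces indexed by the component `K` of `j` and by its complement would separate the union.
  have hcover : (⋃ l, C l ∩ P) ⊆ (⋃ l ∈ K, C l) ∪ ⋃ l ∈ Kᶜ, C l := by
    intro x hx
    obtain ⟨l, hl, -⟩ := Set.mem_iUnion.mp hx
    by_cases hlK : l ∈ K
    exacts [Or.inl (Set.mem_biUnion hlK hl), Or.inr (Set.mem_biUnion hlK hl)]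
  have hmeet {l : ι} {L : Set ι} (hl : l ∈ L) : ((⋃ l, C l ∩ P) ∩ ⋃ l ∈ L, C l).Nonempty :=
    let ⟨x, hx⟩ := hne l
    ⟨x, Set.mem_iUnion.mpr ⟨l, hx⟩, Set.mem_biUnion hl hx.1⟩
  obtain ⟨x, hxU, hxK, hxK'⟩ := isPreconnected_closed_iff.1 hU _ _
    (K.toFinite.isClosed_biUnion fun l _ => hC l) (Kᶜ.toFinite.isClosed_biUnion fun l _ => hC l)
    hcover (hmeet (show j ∈ K from .rfl)) (hmeet (show k ∈ Kᶜ from hjk))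
  obtain ⟨m, -, hxP⟩ := Set.mem_iUnion.mp hxU
  obtain ⟨a, ha, hxa⟩ := Set.mem_iUnion₂.mp hxK
  obtain ⟨b, hb, hxb⟩ := Set.mem_iUnion₂.mp hxK'
  have hab : (intersectionGraph fun j => C j ∩ P).Adj a b :=
    intersectionGraph_adj.mpr ⟨fun h => hb (h ▸ ha), x, ⟨hxa, hxP⟩, hxb, hxP⟩
  exact hb (ha.trans hab.reachable)

theorem exists_isConnected_biUnion_compl_singleton_inter [Finite ι] [Nontrivial ι]
    {C : ι → Set X} (hC : ∀ j, IsClosed (C j)) {P : Set X}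
    (hS : ∀ j, _root_.IsConnected (C j ∩ P)) (hU : _root_.IsConnected ((⋃ j, C j) ∩ P)) :
    ∃ i, _root_.IsConnected ((⋃ j ∈ ({i}ᶜ : Set ι), C j) ∩ P) := by
  rw [Set.iUnion_inter] at hU
  have hG : (intersectionGraph fun j => C j ∩ P).Connected :=
    ⟨intersectionGraph_preconnected_of_isClosed hC (fun j => (hS j).nonempty) hU.isPreconnected⟩
  obtain ⟨i, hi⟩ := hG.exists_connected_induce_compl_singleton_of_finite_nontrivial
  rw [← intersectionGraph_comp_subtypeVal] at hi
  refine ⟨i, ?_⟩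
  simpa [Set.biUnion_eq_iUnion, Set.iUnion_inter] using
    IsConnected.iUnion_of_connected_intersectionGraph (S := (fun j => C j ∩ P) ∘ Subtype.val)
      (fun j => hS j.1) hi

end IntersectionGraph

lemma Topology.IsInducing.isConnected_image {X Y : Type*} [TopologicalSpace X]
    [TopologicalSpace Y] {f : X → Y} (hf : IsInducing f) {s : Set X} :
    _root_.IsConnected (f '' s) ↔ _root_.IsConnected s := by
  simp only [_root_.IsConnected, Set.image_nonempty, hf.isPreconnected_image]

lemma Topology.IsClosedEmbedding.isConnected_compl_closedPoints_iff {X Y : Type*}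
    [TopologicalSpace X] [TopologicalSpace Y] {f : X → Y} (hf : IsClosedEmbedding f) :
    _root_.IsConnected (closedPoints X)ᶜ ↔ _root_.IsConnected (Set.range f \ closedPoints Y) := by
  rw [← Set.image_compl_preimage, hf.preimage_closedPoints, hf.isInducing.isConnected_image]

lemma puncturedSpectrum_eq_compl_closedPoints (A : Type) [CommRing A] :
    puncturedSpectrum A = (closedPoints (PrimeSpectrum A))ᶜ := by
  ext p
  simp [puncturedSpectrum, mem_closedPoints_iff, isClosed_singleton_iff_isMaximal]

lemma isConnected_puncturedSpectrum_quotient_iff {A : Type} [CommRing A] (I : Ideal A) :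
    _root_.IsConnected (puncturedSpectrum (A ⧸ I)) ↔
      _root_.IsConnected (zeroLocus I ∩ puncturedSpectrum A) := by
  have hf := isClosedEmbedding_comap_of_surjective _ _ (Ideal.Quotient.mk_surjective (I := I))
  rw [puncturedSpectrum_eq_compl_closedPoints, puncturedSpectrum_eq_compl_closedPoints,
    hf.isConnected_compl_closedPoints_iff,
    range_comap_of_surjective _ _ Ideal.Quotient.mk_surjective, Ideal.mk_ker, Set.sdiff_eq]

lemma isConnected_zeroLocus_inter_puncturedSpectrum {A : Type} [CommRing A]
    {p : PrimeSpectrum A} (hp : p ∈ puncturedSpectrum A) :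
    _root_.IsConnected (zeroLocus p.asIdeal ∩ puncturedSpectrum A) :=
  isConnected_singleton.subset_closure
    (Set.singleton_subset_iff.mpr ⟨(mem_zeroLocus _ _).mpr le_rfl, hp⟩)
    (by rw [PrimeSpectrum.closure_singleton]; exact Set.inter_subset_left)

lemma IsLocalRing.not_isMaximal_of_mem_minimalPrimes {A : Type} [CommRing A] [IsLocalRing A]
    {I p : Ideal A} (hI : (zeroLocus I ∩ puncturedSpectrum A).Nonempty)
    (hp : p ∈ I.minimalPrimes) : ¬ p.IsMaximal := by
  intro hmax
  obtain ⟨q, hIq, hq⟩ := hI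
  have hqp : q.asIdeal ≤ p := eq_maximalIdeal hmax ▸ le_maximalIdeal q.isPrime.ne_top
  exact hq (le_antisymm hqp (hp.2 ⟨q.isPrime, (mem_zeroLocus _ _).mp hIq⟩ hqp) ▸ hmax)

lemma zeroLocus_eq_biUnion_minimalPrimes {A : Type*} [CommRing A] (I : Ideal A) :
    zeroLocus I = ⋃ p ∈ I.minimalPrimes, zeroLocus (p : Set A) := by
  ext q
  simp only [Set.mem_iUnion, mem_zeroLocus, SetLike.coe_subset_coe, exists_prop]
  exact ⟨fun hIq => Ideal.exists_minimalPrimes_le hIq, fun ⟨p, hp, hpq⟩ => hp.1.2.trans hpq⟩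

lemma zeroLocus_biInf_of_finite {A ι : Type*} [CommRing A] {s : Set ι} (hs : s.Finite)
    (f : ι → Ideal A) : zeroLocus ↑(⨅ j ∈ s, f j) = ⋃ j ∈ s, zeroLocus (f j : Set A) := by
  ext q
  have hinf : (⨅ j ∈ s, f j) = hs.toFinset.inf f := by simp [Finset.inf_eq_iInf]
  simp only [mem_zeroLocus, SetLike.coe_subset_coe, hinf, q.isPrime.inf_le', Set.mem_iUnion,
    Set.Finite.mem_toFinset, exists_prop]

theorem connected_subgraph_reduction_general
    (A : Type) [CommRing A] [IsLocalRing A]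
    (𝔞 : Ideal A) (t : ℕ) (ht : 2 ≤ t)
    (𝔭 : Fin t → Ideal A)
    (hmin : 𝔞.minimalPrimes = Set.range 𝔭)
    (hconn : _root_.IsConnected (puncturedSpectrum (A ⧸ 𝔞))) :
    ∃ i : Fin t,
      _root_.IsConnected (puncturedSpectrum (A ⧸ (⨅ j ∈ ({i}ᶜ : Set (Fin t)), 𝔭 j))) := by
  have : Nontrivial (Fin t) := Fin.nontrivial_iff_two_le.mpr ht
  rw [isConnected_puncturedSpectrum_quotient_iff] at hconn
  have h𝔭 (j : Fin t) : 𝔭 j ∈ 𝔞.minimalPrimes := hmin ▸ Set.mem_range_self j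
  have hpiece (j : Fin t) : _root_.IsConnected (zeroLocus (𝔭 j : Set A) ∩ puncturedSpectrum A) :=
    isConnected_zeroLocus_inter_puncturedSpectrum (p := ⟨𝔭 j, (h𝔭 j).1.1⟩)
      (not_isMaximal_of_mem_minimalPrimes hconn.nonempty (h𝔭 j))
  rw [zeroLocus_eq_biUnion_minimalPrimes, hmin, Set.biUnion_range] at hconn
  obtain ⟨i, hi⟩ := exists_isConnected_biUnion_compl_singleton_inter
    (fun j => isClosed_zeroLocus _) hpiece hconn
  refine ⟨i, ?_⟩
  rwa [isConnected_puncturedSpectrum_quotient_iff, zeroLocus_biInf_of_finite (Set.toFinite _)]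

/-- **Proposition 3.1.** If the punctured spectrum of `A/𝔞` is connected, where
`𝔞` has minimal primes `𝔭_1, …, 𝔭_t` with `t ≥ 2`, then for some `i` the punctured
spectrum of `A/𝔟_i` is connected, where `𝔟_i = ⋂_{j ≠ i} 𝔭_j`. -/
theorem connected_subgraph_reduction
    (A : Type) [CommRing A] [IsLocalRing A] [IsNoetherianRing A]
    (hcat : IsCatenaryRing A)
    (𝔞 : Ideal A) (t : ℕ) (ht : 2 ≤ t)
    (𝔭 : Fin t → Ideal A) (hinj : Function.Injective 𝔭)
    (hmin : 𝔞.minimalPrimes = Set.range 𝔭)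
    (hconn : _root_.IsConnected (puncturedSpectrum (A ⧸ 𝔞))) :
    ∃ i : Fin t,
      _root_.IsConnected (puncturedSpectrum (A ⧸ (⨅ j ∈ ({i}ᶜ : Set (Fin t)), 𝔭 j))) :=
  connected_subgraph_reduction_general A 𝔞 t ht 𝔭 hmin hconn
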